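/- arXiv:2501.15033 — 3 statements merged into one kernel-verified Lean document; each statement's English description precedes it below -/
import Mathlib

section
/- The explicit upper linear sieve functions fit together into a solution of the linear sieve differential-difference system: F₂(3) = F₁(3), F₃(5) = F₂(5), the function s ↦ s·F₂(s) is differentiable on (3,5) with derivative f₁(s−1) at every s ∈ (3,5), and the function s ↦ s·F₃(s) is differentiable on (5,7) with derivative f₂(s−1) at every s ∈ (5,7). -/
/-!
Put `G x = ∫₂ˣ log (t - 1) / t dt`. Then `s F₂(s) = 2e^γ (1 + G (s - 1))`, and the first
derivative is the fundamental theorem of calculus. Splitting `log ((u - 1)/(t + 1))` as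
`log (u - 1) - log (t + 1)` turns the double integral in `F₃` into
`H s = G (s - 1) G (s - 3) - log (s - 1) M (s - 3) - R (s - 3)` with one-variable antiderivatives
`M`, `R`. In `H'` all terms with the factor `log (s - 4) / (s - 3)` cancel, leaving
`(log (s - 2) G (s - 3) - M (s - 3)) / (s - 1)`. Its numerator is the inner part
`∫₃^{s-2} G (t - 1) / t dt` of `f₂ (s - 1)`: as functions of `y = s - 2` both sides have derivative
`G (y - 1) / y` and vanish at `y = 3`.
-/

/-- The upper linear sieve function `F₁`, valid for `0 < s ≤ 3`. -/
noncomputable def F₁ (s : ℝ) : ℝ := 2 * Real.exp Real.eulerMascheroniConstant / s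

/-- The upper linear sieve function `F₂`, valid for `3 ≤ s ≤ 5`. -/
noncomputable def F₂ (s : ℝ) : ℝ :=
  (2 * Real.exp Real.eulerMascheroniConstant / s) *
    (1 + ∫ t in (2:ℝ)..(s - 1), Real.log (t - 1) / t)

/-- The upper linear sieve function `F₃`, valid for `5 ≤ s ≤ 7`. -/
noncomputable def F₃ (s : ℝ) : ℝ :=
  (2 * Real.exp Real.eulerMascheroniConstant / s) *
    (1 + (∫ t in (2:ℝ)..(s - 1), Real.log (t - 1) / t)
      + ∫ t in (2:ℝ)..(s - 3), (Real.log (t - 1) / t) *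
          ∫ u in (t + 2)..(s - 1), (1 / u) * Real.log ((u - 1) / (t + 1)))

/-- The lower linear sieve function `f₁`, valid for `2 ≤ s ≤ 4`. -/
noncomputable def f₁ (s : ℝ) : ℝ :=
  (2 * Real.exp Real.eulerMascheroniConstant / s) * Real.log (s - 1)

/-- The lower linear sieve function `f₂`, valid for `4 ≤ s ≤ 6`. -/
noncomputable def f₂ (s : ℝ) : ℝ :=
  (2 * Real.exp Real.eulerMascheroniConstant / s) *
    (Real.log (s - 1)
      + ∫ t in (3:ℝ)..(s - 1), (1 / t) * ∫ u in (2:ℝ)..(t - 1), Real.log (u - 1) / u)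

open Real Set MeasureTheory

namespace LinearSieve

section HalfLine

variable {f : ℝ → ℝ} {a b c x : ℝ}

theorem intervalIntegrable_of_continuousOn_Ioi (hf : ContinuousOn f (Ioi c)) (ha : c < a)
    (hb : c < b) : IntervalIntegrable f volume a b :=
  (hf.mono fun _ ht => (lt_min ha hb).trans_le ht.1).intervalIntegrable

theorem hasDerivAt_integral_of_continuousOn_Ioi (hf : ContinuousOn f (Ioi c)) (ha : c < a)
    (hx : c < x) : HasDerivAt (fun y => ∫ t in a..y, f t) (f x) x :=
  intervalIntegral.integral_hasDerivAt_right (intervalIntegrable_of_continuousOn_Ioi hf ha hx)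
    (hf.stronglyMeasurableAtFilter isOpen_Ioi x hx) (hf.continuousAt (Ioi_mem_nhds hx))

end HalfLine

noncomputable def G (x : ℝ) : ℝ := ∫ t in (2:ℝ)..x, log (t - 1) / t

noncomputable def M (x : ℝ) : ℝ := ∫ t in (2:ℝ)..x, log (t - 1) / t * log (t + 1)

noncomputable def R (x : ℝ) : ℝ :=
  ∫ t in (2:ℝ)..x, log (t - 1) / t * (G (t + 2) - log (t + 1) * log (t + 2))

theorem continuousOn_log_sub_one_div : ContinuousOn (fun t : ℝ => log (t - 1) / t) (Ioi 1) := by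
  refine ContinuousOn.div ?_ continuousOn_id fun t (ht : 1 < t) => by positivity
  exact (continuousOn_log.comp (continuousOn_id.sub continuousOn_const)) fun t (ht : 1 < t) =>
    (sub_pos.2 ht).ne'

theorem hasDerivAt_G {x : ℝ} (hx : 1 < x) : HasDerivAt G (log (x - 1) / x) x :=
  hasDerivAt_integral_of_continuousOn_Ioi continuousOn_log_sub_one_div one_lt_two hx

theorem continuousOn_G : ContinuousOn G (Ioi 1) :=
  fun _ hx => (hasDerivAt_G hx).continuousAt.continuousWithinAt

theorem continuousOn_integrand_M :
    ContinuousOn (fun t : ℝ => log (t - 1) / t * log (t + 1)) (Ioi 1) := by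
  refine continuousOn_log_sub_one_div.mul ?_
  fun_prop (disch := intro t (ht : 1 < t); positivity)

theorem continuousOn_integrand_R :
    ContinuousOn (fun t : ℝ => log (t - 1) / t * (G (t + 2) - log (t + 1) * log (t + 2)))
      (Ioi 1) := by
  refine continuousOn_log_sub_one_div.mul (ContinuousOn.sub ?_ ?_)
  · exact continuousOn_G.comp (continuousOn_id.add continuousOn_const)
      fun t (ht : 1 < t) => show 1 < t + 2 by linarith
  · fun_prop (disch := intro t (ht : 1 < t); positivity)

theorem hasDerivAt_M {x : ℝ} (hx : 1 < x) :
    HasDerivAt M (log (x - 1) / x * log (x + 1)) x :=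
  hasDerivAt_integral_of_continuousOn_Ioi continuousOn_integrand_M one_lt_two hx

theorem hasDerivAt_R {x : ℝ} (hx : 1 < x) :
    HasDerivAt R (log (x - 1) / x * (G (x + 2) - log (x + 1) * log (x + 2))) x :=
  hasDerivAt_integral_of_continuousOn_Ioi continuousOn_integrand_R one_lt_two hx

theorem integral_inv_mul_log_div {t y : ℝ} (ht : -1 < t) (hy : 1 < y) :
    ∫ u in (t + 2)..y, 1 / u * log ((u - 1) / (t + 1)) =
      G y - G (t + 2) - log (t + 1) * (log y - log (t + 2)) := by
  have ht2 : 1 < t + 2 := by linarith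
  have hIoi : uIcc (t + 2) y ⊆ Ioi 1 := fun _ hu => (lt_min ht2 hy).trans_le hu.1
  have hint : IntervalIntegrable (fun u => log (u - 1) / u) volume (t + 2) y :=
    intervalIntegrable_of_continuousOn_Ioi continuousOn_log_sub_one_div ht2 hy
  calc ∫ u in (t + 2)..y, 1 / u * log ((u - 1) / (t + 1))
      = ∫ u in (t + 2)..y, (log (u - 1) / u - log (t + 1) * (1 / u)) := by
        refine intervalIntegral.integral_congr fun u hu => ?_
        have hu : 1 < u := hIoi hu
        rw [log_div (by linarith) (by linarith)]
        ring
    _ = (∫ u in (t + 2)..y, log (u - 1) / u) - log (t + 1) * ∫ u in (t + 2)..y, 1 / u := by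
        rw [intervalIntegral.integral_sub hint, intervalIntegral.integral_const_mul]
        exact (intervalIntegral.intervalIntegrable_one_div
          (fun u hu => (zero_lt_one.trans (hIoi hu)).ne') continuousOn_id).const_mul _
    _ = G y - G (t + 2) - log (t + 1) * (log y - log (t + 2)) := by
        rw [integral_one_div fun h => (mem_Ioi.1 (hIoi h)).not_ge zero_le_one,
          log_div (by positivity) (by positivity), G, G,
          intervalIntegral.integral_interval_sub_left
            (intervalIntegrable_of_continuousOn_Ioi continuousOn_log_sub_one_div one_lt_two hy)
            (intervalIntegrable_of_continuousOn_Ioi continuousOn_log_sub_one_div one_lt_two ht2)]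

noncomputable def H (s : ℝ) : ℝ := G (s - 1) * G (s - 3) - log (s - 1) * M (s - 3) - R (s - 3)

theorem integral_mul_integral_inv_mul_log_div {s : ℝ} (hs : 4 < s) :
    ∫ t in (2:ℝ)..(s - 3), (log (t - 1) / t) *
        ∫ u in (t + 2)..(s - 1), (1 / u) * log ((u - 1) / (t + 1)) = H s := by
  have hs3 : 1 < s - 3 := by linarith
  have hint {f : ℝ → ℝ} (hf : ContinuousOn f (Ioi 1)) : IntervalIntegrable f volume 2 (s - 3) :=
    intervalIntegrable_of_continuousOn_Ioi hf one_lt_two hs3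
  calc _ = ∫ t in (2:ℝ)..(s - 3), (G (s - 1) * (log (t - 1) / t)
          - log (s - 1) * (log (t - 1) / t * log (t + 1))
          - log (t - 1) / t * (G (t + 2) - log (t + 1) * log (t + 2))) := by
        refine intervalIntegral.integral_congr fun t ht => ?_
        have ht : 1 < t := (lt_min one_lt_two hs3).trans_le ht.1
        rw [integral_inv_mul_log_div (by linarith) (by linarith)]
        ring
    _ = H s := by
        have hG : IntervalIntegrable (fun t => G (s - 1) * (log (t - 1) / t)) volume 2 (s - 3) :=
          hint (continuousOn_const.mul continuousOn_log_sub_one_div)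
        have hM : IntervalIntegrable (fun t => log (s - 1) * (log (t - 1) / t * log (t + 1)))
            volume 2 (s - 3) :=
          hint (continuousOn_const.mul continuousOn_integrand_M)
        rw [intervalIntegral.integral_sub (hG.sub hM) (hint continuousOn_integrand_R),
          intervalIntegral.integral_sub hG hM,
          intervalIntegral.integral_const_mul, intervalIntegral.integral_const_mul]
        rfl

theorem hasDerivAt_H {s : ℝ} (hs : 4 < s) :
    HasDerivAt H ((log (s - 2) * G (s - 3) - M (s - 3)) / (s - 1)) s := by
  have hG₁ := (hasDerivAt_G (x := s - 1) (by linarith)).comp_sub_const s 1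
  have hG₃ := (hasDerivAt_G (x := s - 3) (by linarith)).comp_sub_const s 3
  have hlog := (hasDerivAt_log (x := s - 1) (by linarith)).comp_sub_const s 1
  have hM := (hasDerivAt_M (x := s - 3) (by linarith)).comp_sub_const s 3
  have hR := (hasDerivAt_R (x := s - 3) (by linarith)).comp_sub_const s 3
  refine (((hG₁.mul hG₃).sub (hlog.mul hM)).sub hR).congr_deriv ?_
  rw [show s - 1 - 1 = s - 2 by ring, show s - 3 + 1 = s - 2 by ring,
    show s - 3 + 2 = s - 1 by ring]
  field_simp
  ring

theorem log_mul_G_sub_M {y : ℝ} (hy : 2 < y) :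
    log y * G (y - 1) - M (y - 1) = ∫ t in (3:ℝ)..y, 1 / t * G (t - 1) := by
  have hf (x : ℝ) (hx : x ∈ Ioi 2) :
      HasDerivAt (fun y => log y * G (y - 1) - M (y - 1)) (1 / x * G (x - 1)) x := by
    have hx : 2 < x := hx
    refine (((hasDerivAt_log (by positivity)).mul
      ((hasDerivAt_G (x := x - 1) (by linarith)).comp_sub_const x 1)).sub
      ((hasDerivAt_M (x := x - 1) (by linarith)).comp_sub_const x 1)).congr_deriv ?_
    rw [sub_add_cancel]
    field_simp
    ring
  have hg (x : ℝ) (hx : x ∈ Ioi 2) :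
      HasDerivAt (fun y => ∫ t in (3:ℝ)..y, 1 / t * G (t - 1)) (1 / x * G (x - 1)) x := by
    refine hasDerivAt_integral_of_continuousOn_Ioi (ContinuousOn.mul ?_ ?_) (by norm_num) hx
    · exact continuousOn_const.div continuousOn_id fun t (ht : 2 < t) => by positivity
    · exact continuousOn_G.comp (continuousOn_id.sub continuousOn_const)
        fun t (ht : 2 < t) => show 1 < t - 1 by linarith
  refine isOpen_Ioi.eqOn_of_deriv_eq isPreconnected_Ioi
    (fun x hx => (hf x hx).differentiableAt.differentiableWithinAt)
    (fun x hx => (hg x hx).differentiableAt.differentiableWithinAt)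
    (fun x hx => (hf x hx).deriv.trans (hg x hx).deriv.symm)
    (show (3:ℝ) ∈ Ioi 2 by norm_num) ?_ hy
  norm_num [G, M]

theorem mul_F₂ {s : ℝ} (hs : s ≠ 0) :
    s * F₂ s = 2 * exp eulerMascheroniConstant * (1 + G (s - 1)) := by
  rw [F₂, G]
  field_simp

theorem mul_F₃ {s : ℝ} (hs : 4 < s) :
    s * F₃ s = 2 * exp eulerMascheroniConstant * (1 + G (s - 1) + H s) := by
  rw [F₃, integral_mul_integral_inv_mul_log_div hs, G]
  field_simp

theorem hasDerivAt_mul_F₂ {s : ℝ} (hs : 2 < s) :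
    HasDerivAt (fun x => x * F₂ x) (f₁ (s - 1)) s := by
  have hev : (fun x => x * F₂ x) =ᶠ[nhds s]
      fun x => 2 * exp eulerMascheroniConstant * (1 + G (x - 1)) :=
    (eventually_ne_nhds (by positivity)).mono fun x hx => mul_F₂ hx
  refine HasDerivAt.congr_of_eventuallyEq ?_ hev
  refine ((((hasDerivAt_G (x := s - 1) (by linarith)).comp_sub_const s 1).const_add 1).const_mul
    (2 * exp eulerMascheroniConstant)).congr_deriv ?_
  rw [f₁]
  ring

theorem hasDerivAt_mul_F₃ {s : ℝ} (hs : 4 < s) :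
    HasDerivAt (fun x => x * F₃ x) (f₂ (s - 1)) s := by
  have hev : (fun x => x * F₃ x) =ᶠ[nhds s]
      fun x => 2 * exp eulerMascheroniConstant * (1 + G (x - 1) + H x) :=
    (eventually_gt_nhds hs).mono fun x hx => mul_F₃ hx
  refine HasDerivAt.congr_of_eventuallyEq ?_ hev
  refine ((((hasDerivAt_G (x := s - 1) (by linarith)).comp_sub_const s 1).const_add 1).add
    (hasDerivAt_H hs)).const_mul (2 * exp eulerMascheroniConstant) |>.congr_deriv ?_
  have key := log_mul_G_sub_M (y := s - 2) (by linarith)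
  rw [show s - 2 - 1 = s - 3 by ring] at key
  show _ = 2 * exp eulerMascheroniConstant / (s - 1) *
    (log (s - 1 - 1) + ∫ t in (3:ℝ)..(s - 1 - 1), 1 / t * G (t - 1))
  rw [show s - 1 - 1 = s - 2 by ring, key]
  ring

end LinearSieve

theorem stmt6 :
    F₂ 3 = F₁ 3 ∧ F₃ 5 = F₂ 5 ∧
    (∀ s ∈ Set.Ioo (3:ℝ) 5, HasDerivAt (fun x : ℝ => x * F₂ x) (f₁ (s - 1)) s) ∧
    (∀ s ∈ Set.Ioo (5:ℝ) 7, HasDerivAt (fun x : ℝ => x * F₃ x) (f₂ (s - 1)) s) :=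
  ⟨by norm_num [F₁, F₂], by norm_num [F₂, F₃],
    fun s hs => LinearSieve.hasDerivAt_mul_F₂ (by linarith [hs.1]),
    fun s hs => LinearSieve.hasDerivAt_mul_F₃ (by linarith [hs.1])⟩
end

section
/- Let a, b be reals with 1 ≤ a < 3 and a + 5 < b ≤ 8, and let F : (0,7] → ℝ be defined by F(x) = F₁(x) for 0 < x ≤ 3, F(x) = F₂(x) for 3 ≤ x ≤ 5, and F(x) = F₃(x) for 5 ≤ x ≤ 7. Then ∫₁^{b−a} F(b−s) (1/s − 1/(b−a)) ds = 2e^γ (I₁(a,b) + I₂(a,b) + I₃(a,b)). -/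
/-- The quantity `I₁(a,b)`. -/
noncomputable def I₁ (a b : ℝ) : ℝ :=
  (1 / b) * Real.log ((b - 1) * (b - a) / a) - (1 / (b - a)) * Real.log ((b - 1) / a)

/-- The quantity `I₂(a,b)`. -/
noncomputable def I₂ (a b : ℝ) : ℝ :=
  ∫ t in (3:ℝ)..(b - 1), (1 / t) * (1 / (b - t) - 1 / (b - a)) *
    ∫ u in (2:ℝ)..(t - 1), Real.log (u - 1) / u

/-- The quantity `I₃(a,b)`. -/
noncomputable def I₃ (a b : ℝ) : ℝ :=
  ∫ t in (5:ℝ)..(b - 1), (1 / t) * (1 / (b - t) - 1 / (b - a)) *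
    ∫ u in (2:ℝ)..(t - 3), (Real.log (u - 1) / u) *
      ∫ v in (u + 2)..(t - 1), (1 / v) * Real.log ((v - 1) / (u + 1))

open Real MeasureTheory Set intervalIntegral

/-! On all of `(0, 7]`, `F(s) = (2e^γ/s)(1 + A(s) + B(s))` with continuous `A`, `B`
(`sieveCorr₂`, `sieveCorr₃`) vanishing below `3`, resp. `5`. The substitution `t = b - s` turns the
integral into `2e^γ ∫ₐ^{b-1} w(t)(1 + A(t) + B(t)) dt` with `w(t) = (1/t)(1/(b-t) - 1/(b-a))`.
The three resulting integrals are `I₁` (by partial fractions) and, after discarding the range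
where `A`, resp. `B`, vanishes, `I₂` and `I₃`. -/

theorem intervalIntegral.continuous_parametric_intervalIntegral_of_continuous₂
    {X E : Type*} [TopologicalSpace X] [NormedAddCommGroup E] [NormedSpace ℝ E]
    {μ : Measure ℝ} [IsLocallyFiniteMeasure μ] [NullSingletonClass μ] {f : X → ℝ → E}
    (hf : Continuous f.uncurry)
    {l u : X → ℝ} (hl : Continuous l) (hu : Continuous u) :
    Continuous fun x ↦ ∫ t in l x..u x, f x t ∂μ := by
  have hint : ∀ x c d, IntervalIntegrable (f x) μ c d := fun x c d ↦
    (hf.comp (Continuous.prodMk_right x)).intervalIntegrable c d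
  have hsplit : (fun x ↦ ∫ t in l x..u x, f x t ∂μ) =
      fun x ↦ (∫ t in 0..u x, f x t ∂μ) - ∫ t in 0..l x, f x t ∂μ :=
    funext fun x ↦ (integral_interval_sub_left (hint x 0 _) (hint x 0 _)).symm
  rw [hsplit]
  exact (continuous_parametric_intervalIntegral_of_continuous hf hu).sub
    (continuous_parametric_intervalIntegral_of_continuous hf hl)

theorem intervalIntegral.integral_eq_zero_of_forall_le {f : ℝ → ℝ} {c x : ℝ}
    (hf : ∀ u ≤ c, f u = 0) (hx : x ≤ c) : ∫ u in c..x, f u = 0 := by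
  rw [integral_congr (g := 0) fun u hu ↦ hf u (by rw [uIcc_of_ge hx] at hu; exact hu.2),
    Pi.zero_def, integral_zero]

/- Clamped integrands of `F₂`, `F₃`: continuous everywhere, equal to `log (u - 1) / u` and
`(1 / v) log ((v - 1) / (u + 1))` for `u ≥ 2`, `v ≥ 3`, and `sieveKernel₂ = 0` on `u ≤ 2`, so that
`sieveCorr₂`, `sieveCorr₃` vanish below `3`, resp. `5` (instead of being junk there). -/
noncomputable def sieveKernel₂ (u : ℝ) : ℝ := log (max u 2 - 1) / max u 2

noncomputable def sieveKernel₃ (u v : ℝ) : ℝ := 1 / max v 3 * log ((max v 3 - 1) / (max u 1 + 1))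

noncomputable def sieveCorr₂ (s : ℝ) : ℝ := ∫ u in (2:ℝ)..(s - 1), sieveKernel₂ u

noncomputable def sieveCorr₃ (s : ℝ) : ℝ :=
  ∫ u in (2:ℝ)..(s - 3), sieveKernel₂ u * ∫ v in (u + 2)..(s - 1), sieveKernel₃ u v

theorem continuous_sieveKernel₂ : Continuous sieveKernel₂ := by
  have h : ∀ u : ℝ, 2 ≤ max u 2 := fun u ↦ le_max_right u 2
  refine Continuous.div (Continuous.log (f := fun u ↦ max u 2 - 1) (by fun_prop)
    fun u ↦ ?_) (by fun_prop) fun u ↦ ?_ <;> linarith [h u]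

theorem continuous_sieveKernel₃ : Continuous (Function.uncurry sieveKernel₃) := by
  have hu : ∀ u : ℝ, 1 ≤ max u 1 := fun u ↦ le_max_right u 1
  have hv : ∀ v : ℝ, 3 ≤ max v 3 := fun v ↦ le_max_right v 3
  refine (continuous_const.div (by fun_prop) fun p ↦ by linarith [hv p.2]).mul
    ((Continuous.div (by fun_prop) (by fun_prop) fun p ↦ by linarith [hu p.1]).log fun p ↦ ?_)
  exact (div_pos (by linarith [hv p.2]) (by linarith [hu p.1])).ne'

theorem sieveKernel₂_of_le {u : ℝ} (hu : u ≤ 2) : sieveKernel₂ u = 0 := by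
  norm_num [sieveKernel₂, max_eq_right hu]

theorem sieveKernel₂_of_ge {u : ℝ} (hu : 2 ≤ u) : sieveKernel₂ u = log (u - 1) / u := by
  rw [sieveKernel₂, max_eq_left hu]

theorem sieveKernel₃_of_ge {u v : ℝ} (hu : 1 ≤ u) (hv : 3 ≤ v) :
    sieveKernel₃ u v = 1 / v * log ((v - 1) / (u + 1)) := by
  rw [sieveKernel₃, max_eq_left hu, max_eq_left hv]

theorem continuous_sieveCorr₂ : Continuous sieveCorr₂ :=
  (continuous_primitive (fun _ _ ↦ continuous_sieveKernel₂.intervalIntegrable _ _) 2).comp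
    (continuous_id.sub continuous_const)

theorem continuous_sieveCorr₃ : Continuous sieveCorr₃ := by
  have hinner : Continuous fun p : ℝ × ℝ ↦ ∫ v in (p.2 + 2)..(p.1 - 1), sieveKernel₃ p.2 v :=
    continuous_parametric_intervalIntegral_of_continuous₂
      (f := fun (p : ℝ × ℝ) v ↦ sieveKernel₃ p.2 v)
      (continuous_sieveKernel₃.comp (continuous_fst.snd.prodMk continuous_snd))
      (by fun_prop) (by fun_prop)
  exact continuous_parametric_intervalIntegral_of_continuous
    ((continuous_sieveKernel₂.comp continuous_snd).mul hinner) (by fun_prop)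

theorem sieveCorr₂_of_le {s : ℝ} (hs : s ≤ 3) : sieveCorr₂ s = 0 :=
  integral_eq_zero_of_forall_le (fun _ ↦ sieveKernel₂_of_le) (by linarith)

theorem sieveCorr₃_of_le {s : ℝ} (hs : s ≤ 5) : sieveCorr₃ s = 0 :=
  integral_eq_zero_of_forall_le (fun _ hu ↦ by rw [sieveKernel₂_of_le hu, zero_mul])
    (by linarith)

theorem sieveCorr₂_of_ge {s : ℝ} (hs : 3 ≤ s) :
    sieveCorr₂ s = ∫ t in (2:ℝ)..(s - 1), log (t - 1) / t :=
  integral_congr fun t ht ↦ sieveKernel₂_of_ge (by rw [uIcc_of_le (by linarith)] at ht; exact ht.1)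

theorem sieveCorr₃_of_ge {s : ℝ} (hs : 5 ≤ s) :
    sieveCorr₃ s = ∫ t in (2:ℝ)..(s - 3), (log (t - 1) / t) *
      ∫ u in (t + 2)..(s - 1), (1 / u) * log ((u - 1) / (t + 1)) := by
  refine integral_congr fun t ht ↦ ?_
  rw [uIcc_of_le (by linarith)] at ht
  rw [sieveKernel₂_of_ge ht.1]
  congr 1
  refine integral_congr fun u hu ↦ ?_
  rw [uIcc_of_le (by linarith [ht.2])] at hu
  exact sieveKernel₃_of_ge (by linarith [ht.1]) (by linarith [ht.1, hu.1])

theorem eq_mul_one_add_sieveCorr {F : ℝ → ℝ}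
    (hF1 : ∀ x : ℝ, 0 < x → x ≤ 3 → F x = F₁ x)
    (hF2 : ∀ x : ℝ, 3 ≤ x → x ≤ 5 → F x = F₂ x)
    (hF3 : ∀ x : ℝ, 5 ≤ x → x ≤ 7 → F x = F₃ x) {s : ℝ} (hs0 : 0 < s) (hs7 : s ≤ 7) :
    F s = 2 * exp eulerMascheroniConstant / s * (1 + sieveCorr₂ s + sieveCorr₃ s) := by
  rcases le_total s 3 with hs3 | hs3
  · rw [hF1 s hs0 hs3, F₁, sieveCorr₂_of_le hs3, sieveCorr₃_of_le (by linarith)]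
    ring
  rcases le_total s 5 with hs5 | hs5
  · rw [hF2 s hs3 hs5, F₂, sieveCorr₂_of_ge hs3, sieveCorr₃_of_le hs5]
    ring
  · rw [hF3 s hs5 hs7, F₃, sieveCorr₂_of_ge hs3, sieveCorr₃_of_ge hs5]

theorem intervalIntegral.integral_eq_of_eqOn_zero_left {f g : ℝ → ℝ} {a m c : ℝ}
    (hf : IntervalIntegrable f volume a c) (ham : a ≤ m) (hmc : m ≤ c)
    (h0 : EqOn f 0 (Icc a m)) (hg : EqOn f g (Icc m c)) :
    ∫ x in a..c, f x = ∫ x in m..c, g x := by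
  have hac : uIcc a c = Icc a c := uIcc_of_le (ham.trans hmc)
  have hsub₁ : uIcc a m ⊆ uIcc a c := by
    rw [hac, uIcc_of_le ham]; exact Icc_subset_Icc_right hmc
  have hsub₂ : uIcc m c ⊆ uIcc a c := by
    rw [hac, uIcc_of_le hmc]; exact Icc_subset_Icc_left ham
  have hleft : ∫ x in a..m, f x = 0 := by
    rw [integral_congr ((uIcc_of_le ham).symm ▸ h0)]
    simp
  rw [← integral_add_adjacent_intervals (hf.mono_set hsub₁) (hf.mono_set hsub₂), hleft,
    zero_add, integral_congr ((uIcc_of_le hmc).symm ▸ hg)]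

noncomputable def sieveWeight (a b t : ℝ) : ℝ := 1 / t * (1 / (b - t) - 1 / (b - a))

section sieveWeight

variable {a b : ℝ}

theorem continuousOn_sieveWeight (ha : 0 < a) (hab : a + 1 ≤ b) :
    ContinuousOn (sieveWeight a b) (uIcc a (b - 1)) := by
  rw [uIcc_of_le (by linarith)]
  refine (continuousOn_const.div continuousOn_id fun t ht ↦ ?_).mul
    ((continuousOn_const.div (by fun_prop) fun t ht ↦ ?_).sub continuousOn_const)
  · exact (ha.trans_le ht.1).ne'
  · exact sub_ne_zero.2 (by linarith [ht.2])

theorem intervalIntegrable_sieveWeight_mul {h : ℝ → ℝ} (hh : Continuous h) (ha : 0 < a)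
    (hab : a + 1 ≤ b) : IntervalIntegrable (fun t ↦ sieveWeight a b t * h t) volume a (b - 1) :=
  ((continuousOn_sieveWeight ha hab).mul hh.continuousOn).intervalIntegrable

theorem integral_sieveWeight (ha : 0 < a) (hab : a + 1 ≤ b) :
    ∫ t in a..(b - 1), sieveWeight a b t = I₁ a b := by
  have hI : uIcc a (b - 1) = Icc a (b - 1) := uIcc_of_le (by linarith)
  have hpf : EqOn (sieveWeight a b)
      (fun t ↦ (1 / b - 1 / (b - a)) * (1 / t) + 1 / b * (1 / (b - t))) (uIcc a (b - 1)) := by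
    intro t ht
    rw [hI] at ht
    have ht0 : t ≠ 0 := (ha.trans_le ht.1).ne'
    have hbt : b - t ≠ 0 := sub_ne_zero.2 (by linarith [ht.2])
    have hba : b - a ≠ 0 := sub_ne_zero.2 (by linarith)
    have hb : b ≠ 0 := by linarith
    simp only [sieveWeight]
    field_simp
    ring
  have hint₁ : IntervalIntegrable (fun t : ℝ ↦ (1 / b - 1 / (b - a)) * (1 / t))
      volume a (b - 1) :=
    (intervalIntegrable_one_div (fun t ht ↦ (ha.trans_le (hI ▸ ht).1).ne')
      continuousOn_id).const_mul _
  have hint₂ : IntervalIntegrable (fun t : ℝ ↦ 1 / b * (1 / (b - t))) volume a (b - 1) :=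
    (intervalIntegrable_one_div (fun t ht ↦ sub_ne_zero.2 (by linarith [(hI ▸ ht).2]))
      (by fun_prop)).const_mul _
  have h₁ : ∫ t in a..(b - 1), 1 / t = log ((b - 1) / a) :=
    integral_one_div_of_pos ha (by linarith)
  have h₂ : ∫ t in a..(b - 1), 1 / (b - t) = log (b - a) := by
    rw [integral_comp_sub_left (fun t ↦ 1 / t) b, sub_sub_cancel,
      integral_one_div_of_pos one_pos (by linarith), div_one]
  rw [integral_congr hpf, integral_add hint₁ hint₂, intervalIntegral.integral_const_mul,
    intervalIntegral.integral_const_mul, h₁, h₂, I₁, mul_div_right_comm,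
    log_mul (div_pos (by linarith) ha).ne' (by linarith)]
  ring

theorem integral_sieveWeight_mul_sieveCorr₂ (ha : 0 < a) (ha3 : a ≤ 3) (hb : 4 ≤ b) :
    ∫ t in a..(b - 1), sieveWeight a b t * sieveCorr₂ t = I₂ a b :=
  integral_eq_of_eqOn_zero_left (intervalIntegrable_sieveWeight_mul continuous_sieveCorr₂ ha
    (by linarith)) ha3 (by linarith) (fun t ht ↦ by simp [sieveCorr₂_of_le ht.2])
    fun t ht ↦ by simp only [sieveCorr₂_of_ge ht.1, sieveWeight]

theorem integral_sieveWeight_mul_sieveCorr₃ (ha : 0 < a) (ha5 : a ≤ 5) (hb : 6 ≤ b) :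
    ∫ t in a..(b - 1), sieveWeight a b t * sieveCorr₃ t = I₃ a b :=
  integral_eq_of_eqOn_zero_left (intervalIntegrable_sieveWeight_mul continuous_sieveCorr₃ ha
    (by linarith)) ha5 (by linarith) (fun t ht ↦ by simp [sieveCorr₃_of_le ht.2])
    fun t ht ↦ by simp only [sieveCorr₃_of_ge ht.1, sieveWeight]

end sieveWeight

theorem stmt10 (a b : ℝ) (ha : 1 ≤ a) (ha3 : a < 3) (hab : a + 5 < b) (hb : b ≤ 8)
    (F : ℝ → ℝ)
    (hF1 : ∀ x : ℝ, 0 < x → x ≤ 3 → F x = F₁ x)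
    (hF2 : ∀ x : ℝ, 3 ≤ x → x ≤ 5 → F x = F₂ x)
    (hF3 : ∀ x : ℝ, 5 ≤ x → x ≤ 7 → F x = F₃ x) :
    (∫ s in (1:ℝ)..(b - a), F (b - s) * (1 / s - 1 / (b - a)))
      = 2 * Real.exp Real.eulerMascheroniConstant * (I₁ a b + I₂ a b + I₃ a b) := by
  have ha0 : 0 < a := by linarith
  have hab₁ : a + 1 ≤ b := by linarith
  have hF : EqOn (fun t ↦ F t * (1 / (b - t) - 1 / (b - a))) (fun t ↦
      2 * exp eulerMascheroniConstant * (sieveWeight a b t + sieveWeight a b t * sieveCorr₂ t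
        + sieveWeight a b t * sieveCorr₃ t)) (uIcc a (b - 1)) := by
    intro t ht
    rw [uIcc_of_le (by linarith)] at ht
    dsimp only
    rw [eq_mul_one_add_sieveCorr hF1 hF2 hF3 (by linarith [ht.1]) (by linarith [ht.2]),
      sieveWeight]
    ring
  have hw := (continuousOn_sieveWeight ha0 hab₁).intervalIntegrable (μ := volume)
  have hw₂ := intervalIntegrable_sieveWeight_mul continuous_sieveCorr₂ ha0 hab₁
  have hw₃ := intervalIntegrable_sieveWeight_mul continuous_sieveCorr₃ ha0 hab₁
  calc (∫ s in (1:ℝ)..(b - a), F (b - s) * (1 / s - 1 / (b - a)))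
      = ∫ t in a..(b - 1), F t * (1 / (b - t) - 1 / (b - a)) := by
        simpa only [sub_sub_cancel] using integral_comp_sub_left (a := 1) (b := b - a)
          (fun t ↦ F t * (1 / (b - t) - 1 / (b - a))) b
    _ = _ := by
        rw [integral_congr hF, intervalIntegral.integral_const_mul,
          integral_add (hw.add hw₂) hw₃, integral_add hw hw₂,
          integral_sieveWeight ha0 hab₁, integral_sieveWeight_mul_sieveCorr₂ ha0 ha3.le
            (by linarith), integral_sieveWeight_mul_sieveCorr₃ ha0 (by linarith) (by linarith)]
end

section
/- One has ∫₅^{5.6} (1/t) (1/(6.6−t) − 1/5.6) (∫₂^{t−3} (log(u−1)/u) (∫_{u+2}^{t−1} (1/v) log((v−1)/(u+1)) dv) du) dt < 0.00001. -/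
/-!
Every integrand is nonnegative and is bounded by a polynomial in the distance to the lower
end of its range, using `log y ≤ y - 1`: the innermost integrand by `(v - u - 2) / 12`, the
weight `log (u - 1) / u` by `(u - 2) / 2`, and the outer weight by `23 / 140` on `[5, 5.6]`.
Integrating these bounds gives `(t - u - 3)² / 24`, then `(t - 5)⁴ / 576`, and finally
`23 · 0.6⁵ / (140 · 576 · 5) ≈ 4.4 · 10⁻⁶`.
-/

open intervalIntegral

lemma integral_sub_pow (a b : ℝ) (n : ℕ) :
    ∫ x in a..b, (x - a) ^ n = (b - a) ^ (n + 1) / (n + 1) := by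
  simp [integral_comp_sub_right (fun x => x ^ n)]

lemma integral_sub_mul_sub_sq (a b : ℝ) :
    ∫ x in a..b, (x - a) * (b - x) ^ 2 = (b - a) ^ 4 / 12 := by
  have hderiv : ∀ x ∈ Set.uIcc a b,
      HasDerivAt (fun x => -((b - x) ^ 3 * (x - a)) / 3 - (b - x) ^ 4 / 12)
        ((x - a) * (b - x) ^ 2) x := fun x _ => by
    refine ((((((hasDerivAt_id' x).const_sub b).fun_pow 3).fun_mul
      ((hasDerivAt_id' x).sub_const a)).fun_neg.div_const 3).fun_sub
      ((((hasDerivAt_id' x).const_sub b).fun_pow 4).div_const 12)).congr_deriv ?_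
    norm_num
    ring
  rw [integral_eq_sub_of_hasDerivAt hderiv ((by fun_prop : Continuous _).intervalIntegrable _ _)]
  ring

noncomputable def innerIntegral (u t : ℝ) : ℝ :=
  ∫ v in (u + 2)..(t - 1), (1 / v) * Real.log ((v - 1) / (u + 1))

noncomputable def middleIntegral (t : ℝ) : ℝ :=
  ∫ u in (2:ℝ)..(t - 3), (Real.log (u - 1) / u) * innerIntegral u t

lemma norm_inv_mul_log_div_le {u v : ℝ} (hu : 2 ≤ u) (huv : u + 2 ≤ v) :
    ‖(1 / v) * Real.log ((v - 1) / (u + 1))‖ ≤ (v - (u + 2)) / 12 := by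
  have hratio : 1 ≤ (v - 1) / (u + 1) := by
    rw [le_div_iff₀ (by linarith)]; linarith
  have hlog : Real.log ((v - 1) / (u + 1)) ≤ (v - (u + 2)) / 3 :=
    calc Real.log ((v - 1) / (u + 1)) ≤ (v - 1) / (u + 1) - 1 :=
          Real.log_le_sub_one_of_pos (by linarith)
      _ = (v - (u + 2)) / (u + 1) := by field_simp; ring
      _ ≤ (v - (u + 2)) / 3 := div_le_div_of_nonneg_left (by linarith) (by norm_num) (by linarith)
  have hinv : 1 / v ≤ 1 / 4 := one_div_le_one_div_of_le (by norm_num) (by linarith)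
  have hlog0 := Real.log_nonneg hratio
  rw [Real.norm_eq_abs, abs_of_nonneg (mul_nonneg (one_div_nonneg.2 (by linarith)) hlog0)]
  calc 1 / v * Real.log ((v - 1) / (u + 1)) ≤ 1 / 4 * ((v - (u + 2)) / 3) :=
        mul_le_mul hinv hlog hlog0 (by norm_num)
    _ = (v - (u + 2)) / 12 := by ring

lemma norm_log_sub_one_div_le {u : ℝ} (hu : 2 ≤ u) : ‖Real.log (u - 1) / u‖ ≤ (u - 2) / 2 := by
  have hlog : Real.log (u - 1) ≤ u - 2 := by
    linarith [Real.log_le_sub_one_of_pos (by linarith : (0:ℝ) < u - 1)]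
  have hlog0 : 0 ≤ Real.log (u - 1) := Real.log_nonneg (by linarith)
  rw [Real.norm_eq_abs, abs_of_nonneg (div_nonneg hlog0 (by linarith))]
  exact div_le_div₀ (by linarith) hlog (by norm_num) hu

lemma norm_outerWeight_le {t : ℝ} (ht : t ∈ Set.Icc (5:ℝ) 5.6) :
    ‖(1 / t) * (1 / (6.6 - t) - 1 / 5.6)‖ ≤ 23 / 140 := by
  obtain ⟨ht5, ht6⟩ := ht
  have hlow : 0 ≤ 1 / (6.6 - t) - 1 / 5.6 :=
    sub_nonneg.2 (one_div_le_one_div_of_le (by linarith) (by linarith))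
  have hup : 1 / (6.6 - t) - 1 / 5.6 ≤ 23 / 28 := by
    have : 1 / (6.6 - t) ≤ 1 := by rw [div_le_one (by linarith)]; linarith
    norm_num at this ⊢; linarith
  have hinv : 1 / t ≤ 1 / 5 := one_div_le_one_div_of_le (by norm_num) ht5
  rw [Real.norm_eq_abs, abs_of_nonneg (mul_nonneg (one_div_nonneg.2 (by linarith)) hlow)]
  calc 1 / t * (1 / (6.6 - t) - 1 / 5.6) ≤ 1 / 5 * (23 / 28) :=
        mul_le_mul hinv hup hlow (by norm_num)
    _ = 23 / 140 := by norm_num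

lemma norm_innerIntegral_le {u t : ℝ} (hu : 2 ≤ u) (hut : u + 2 ≤ t - 1) :
    ‖innerIntegral u t‖ ≤ (t - u - 3) ^ 2 / 24 := by
  calc ‖innerIntegral u t‖ ≤ ∫ v in (u + 2)..(t - 1), (v - (u + 2)) ^ 1 / 12 := by
        refine norm_integral_le_of_norm_le hut (.of_forall fun v hv => ?_)
          ((by fun_prop : Continuous _).intervalIntegrable _ _)
        simpa using norm_inv_mul_log_div_le hu hv.1.le
    _ = (t - u - 3) ^ 2 / 24 := by
        rw [integral_div, integral_sub_pow]
        ring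

lemma norm_middleIntegral_le {t : ℝ} (ht : 5 ≤ t) : ‖middleIntegral t‖ ≤ (t - 5) ^ 4 / 576 := by
  calc ‖middleIntegral t‖ ≤ ∫ u in (2:ℝ)..(t - 3), (u - 2) * (t - 3 - u) ^ 2 / 48 := by
        refine norm_integral_le_of_norm_le (by linarith) (.of_forall fun u hu => ?_)
          ((by fun_prop : Continuous _).intervalIntegrable _ _)
        rw [norm_mul]
        calc ‖Real.log (u - 1) / u‖ * ‖innerIntegral u t‖ ≤ (u - 2) / 2 * ((t - u - 3) ^ 2 / 24) :=
              mul_le_mul (norm_log_sub_one_div_le hu.1.le) (norm_innerIntegral_le hu.1.le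
                (by linarith [hu.2])) (norm_nonneg _) (by linarith [hu.1])
          _ = (u - 2) * (t - 3 - u) ^ 2 / 48 := by ring
    _ = (t - 5) ^ 4 / 576 := by
        rw [integral_div, integral_sub_mul_sub_sq]
        ring

theorem stmt12 :
    (∫ t in (5:ℝ)..(5.6:ℝ), (1 / t) * (1 / (6.6 - t) - 1 / 5.6) *
        ∫ u in (2:ℝ)..(t - 3), (Real.log (u - 1) / u) *
          ∫ v in (u + 2)..(t - 1), (1 / v) * Real.log ((v - 1) / (u + 1)))
      < 0.00001 := by
  change (∫ t in (5:ℝ)..(5.6:ℝ), (1 / t) * (1 / (6.6 - t) - 1 / 5.6) * middleIntegral t) < _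
  have hbound : ‖∫ t in (5:ℝ)..(5.6:ℝ), (1 / t) * (1 / (6.6 - t) - 1 / 5.6) * middleIntegral t‖
      ≤ ∫ t in (5:ℝ)..(5.6:ℝ), 23 / 140 * ((t - 5) ^ 4 / 576) := by
    refine norm_integral_le_of_norm_le (by norm_num) (.of_forall fun t ht => ?_)
      ((by fun_prop : Continuous _).intervalIntegrable _ _)
    rw [norm_mul]
    exact mul_le_mul (norm_outerWeight_le (Set.Ioc_subset_Icc_self ht))
      (norm_middleIntegral_le ht.1.le) (norm_nonneg _) (by norm_num)
  have hvalue : ∫ t in (5:ℝ)..(5.6:ℝ), 23 / 140 * ((t - 5) ^ 4 / 576) < 0.00001 := by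
    rw [integral_const_mul, integral_div, integral_sub_pow]
    norm_num
  exact (Real.le_norm_self _).trans_lt (hbound.trans_lt hvalue)
end
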